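/- arXiv:2010.03117 — 6 statements merged into one kernel-verified Lean document; each statement's English description precedes it below -/
import Mathlib

section
/- Let G be a countable group acting on a countable set X with finite point stabilizers and finitely many orbits. Then there exist a finite subgroup Λ ≤ G, a proper symmetric length function |·|_{G/Λ} : G/Λ → ℝ_{≥0}, and a function |·|_X : X → ℝ_{≥0} such that (i) |g·x|_X ≤ |gΛ|_{G/Λ} + |x|_X for all g ∈ G, x ∈ X; and (ii) {x ∈ X : |x|_X ≤ R} is finite for every R > 0. -/
/-!
Already the trivial subgroup `Λ = ⊥` works. Enumerate `G` by an injection `f : G → ℕ` and give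
each letter `g` the weight `f g + f g⁻¹ + 1`; the resulting weighted word length on `G` is a
proper symmetric length function, because a word of weight at most `n` has at most `n` letters,
all taken from the finite set of letters of weight at most `n`. On `X`, fix one point in each of
the finitely many orbits and let `|x|` be the least length of a group element carrying one of
these points to `x`. The triangle inequality for the length gives (i), and a sublevel set of
`|·|` is the image of a finite set of pairs (group element, orbit representative).
-/

open MulAction

lemma List.finite_setOf_length_le_forall_mem {α : Type*} {A : Set α} (hA : A.Finite) (n : ℕ) :
    {l : List α | l.length ≤ n ∧ ∀ a ∈ l, a ∈ A}.Finite := by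
  have := hA.to_subtype
  refine ((List.finite_length_le A n).image (List.map Subtype.val)).subset ?_
  rintro l ⟨hlen, hmem⟩
  lift l to List A using hmem
  exact ⟨l, by simpa using hlen, rfl⟩

lemma finite_setOf_natCast_le {α : Type*} {f : α → ℕ} (hf : ∀ n, {a | f a ≤ n}.Finite) (R : ℝ) :
    {a | (f a : ℝ) ≤ R}.Finite :=
  (hf ⌊R⌋₊).subset fun _ ha => Nat.le_floor ha

section WordLength

variable {G : Type*} [Group G] (w : G → ℕ)

noncomputable def weightedWordLength (g : G) : ℕ :=
  sInf {n | ∃ l : List G, l.prod = g ∧ (l.map w).sum = n}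

lemma weightedWordLength_le {g : G} {l : List G} (hl : l.prod = g) :
    weightedWordLength w g ≤ (l.map w).sum :=
  Nat.sInf_le ⟨l, hl, rfl⟩

lemma exists_weightedWordLength_eq (g : G) :
    ∃ l : List G, l.prod = g ∧ (l.map w).sum = weightedWordLength w g :=
  Nat.sInf_mem (s := {n | ∃ l : List G, l.prod = g ∧ (l.map w).sum = n})
    ⟨_, [g], List.prod_singleton, rfl⟩

lemma weightedWordLength_mul_le (g h : G) :
    weightedWordLength w (g * h) ≤ weightedWordLength w g + weightedWordLength w h := by
  obtain ⟨l₁, hl₁, hs₁⟩ := exists_weightedWordLength_eq w g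
  obtain ⟨l₂, hl₂, hs₂⟩ := exists_weightedWordLength_eq w h
  simpa [hl₁, hl₂, hs₁, hs₂] using weightedWordLength_le w (l := l₁ ++ l₂) rfl

variable {w}

lemma weightedWordLength_inv (hw : ∀ g, w g⁻¹ = w g) (g : G) :
    weightedWordLength w g⁻¹ = weightedWordLength w g := by
  suffices key : ∀ g : G, weightedWordLength w g⁻¹ ≤ weightedWordLength w g from
    (key g).antisymm (by simpa using key g⁻¹)
  intro g
  obtain ⟨l, hl, hs⟩ := exists_weightedWordLength_eq w g
  calc weightedWordLength w g⁻¹ ≤ (((l.map (·⁻¹)).reverse).map w).sum :=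
        weightedWordLength_le w (by rw [← List.prod_inv_reverse, hl])
    _ = weightedWordLength w g := by
        simp only [List.map_reverse, List.sum_reverse, List.map_map, ← hs]
        exact congrArg List.sum (List.map_congr_left fun x _ => hw x)

lemma weightedWordLength_eq_zero_iff (hw : ∀ g, 0 < w g) {g : G} :
    weightedWordLength w g = 0 ↔ g = 1 := by
  refine ⟨fun h0 => ?_, fun h1 => Nat.le_zero.mp (h1 ▸ weightedWordLength_le w List.prod_nil)⟩
  obtain ⟨l, hl, hs⟩ := exists_weightedWordLength_eq w g
  cases l with
  | nil => exact hl.symm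
  | cons a t =>
    have := hw a
    simp only [List.map_cons, List.sum_cons] at hs
    omega

lemma finite_setOf_weightedWordLength_le (hw : ∀ g, 0 < w g)
    (hfin : ∀ n, {g | w g ≤ n}.Finite) (n : ℕ) :
    {g : G | weightedWordLength w g ≤ n}.Finite := by
  refine ((List.finite_setOf_length_le_forall_mem (hfin n) n).image List.prod).subset ?_
  intro g hg
  obtain ⟨l, hl, hs⟩ := exists_weightedWordLength_eq w g
  have hsum : (l.map w).sum ≤ n := hs ▸ hg
  refine ⟨l, ⟨?_, fun a ha => ?_⟩, hl⟩
  · calc l.length = (l.map w).length := (List.length_map _).symm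
      _ ≤ (l.map w).sum := List.length_le_sum_of_one_le _ (List.forall_mem_map.2 fun a _ => hw a)
      _ ≤ n := hsum
  · exact (List.single_le_sum (by simp) _ (List.mem_map_of_mem ha)).trans hsum

end WordLength

lemma exists_proper_length_nat (G : Type*) [Group G] [Countable G] :
    ∃ N : G → ℕ, (∀ g, N g = 0 ↔ g = 1) ∧ (∀ g h, N (g * h) ≤ N g + N h) ∧
      (∀ g, N g⁻¹ = N g) ∧ ∀ n, {g | N g ≤ n}.Finite := by
  obtain ⟨f, hf⟩ := Countable.exists_injective_nat G
  set w : G → ℕ := fun g => f g + f g⁻¹ + 1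
  have hw_pos : ∀ g, 0 < w g := fun g => Nat.succ_pos _
  have hw_inv : ∀ g, w g⁻¹ = w g := fun g => by simp only [w, inv_inv]; ring
  have hw_fin : ∀ n, {g | w g ≤ n}.Finite := fun n =>
    ((Set.finite_Iic n).preimage hf.injOn).subset fun g (hg : w g ≤ n) =>
      show f g ≤ n by simp only [w] at hg; omega
  exact ⟨weightedWordLength w, fun g => weightedWordLength_eq_zero_iff hw_pos,
    weightedWordLength_mul_le w, weightedWordLength_inv hw_inv,
    finite_setOf_weightedWordLength_le hw_pos hw_fin⟩

lemma exists_finite_orbit_representatives (G X : Type*) [Group G] [MulAction G X]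
    [Finite (orbitRel.Quotient G X)] :
    ∃ S : Set X, S.Finite ∧ ∀ x : X, ∃ h : G, ∃ s ∈ S, h • s = x := by
  refine ⟨Set.range (Quotient.out : orbitRel.Quotient G X → X), Set.finite_range _, fun x => ?_⟩
  have hx : (Quotient.mk'' x : orbitRel.Quotient G X).out ∈ orbit G x :=
    orbitRel_apply.mp (Quotient.exact' (Quotient.out_eq' _))
  obtain ⟨g, hg⟩ := hx
  exact ⟨g⁻¹, _, ⟨_, rfl⟩, by rw [← hg, inv_smul_smul]⟩

section OrbitHeight

variable {G X : Type*} [Group G] [MulAction G X] (N : G → ℕ) (S : Set X)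

noncomputable def orbitHeight (x : X) : ℕ :=
  sInf (N '' {h : G | ∃ s ∈ S, h • s = x})

variable {S}

lemma exists_orbitHeight_eq (hS : ∀ x : X, ∃ h : G, ∃ s ∈ S, h • s = x) (x : X) :
    ∃ h : G, ∃ s ∈ S, h • s = x ∧ N h = orbitHeight N S x := by
  obtain ⟨h₀, hh₀⟩ := hS x
  obtain ⟨h, ⟨s, hs, hsx⟩, hN⟩ :=
    Nat.sInf_mem (s := N '' {h : G | ∃ s ∈ S, h • s = x}) ⟨N h₀, h₀, hh₀, rfl⟩
  exact ⟨h, s, hs, hsx, hN⟩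

variable {N}

lemma orbitHeight_smul_le (hS : ∀ x : X, ∃ h : G, ∃ s ∈ S, h • s = x)
    (hN : ∀ g h, N (g * h) ≤ N g + N h) (g : G) (x : X) :
    orbitHeight N S (g • x) ≤ N g + orbitHeight N S x := by
  obtain ⟨h, s, hs, hsx, hh⟩ := exists_orbitHeight_eq N hS x
  calc orbitHeight N S (g • x) ≤ N (g * h) :=
        Nat.sInf_le ⟨g * h, ⟨s, hs, by rw [mul_smul, hsx]⟩, rfl⟩
    _ ≤ N g + orbitHeight N S x := hh ▸ hN g h

lemma finite_setOf_orbitHeight_le (hS : ∀ x : X, ∃ h : G, ∃ s ∈ S, h • s = x)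
    (hS_fin : S.Finite) (hN : ∀ n, {g | N g ≤ n}.Finite) (n : ℕ) :
    {x : X | orbitHeight N S x ≤ n}.Finite := by
  refine (((hN n).prod hS_fin).image fun p => p.1 • p.2).subset fun x hx => ?_
  obtain ⟨h, s, hs, hsx, hh⟩ := exists_orbitHeight_eq N hS x
  exact ⟨(h, s), ⟨show N h ≤ n by rwa [hh], hs⟩, hsx⟩

end OrbitHeight

theorem stmt3_general (G : Type*) [Group G] [Countable G] (X : Type*) [MulAction G X]
    (horb : Finite (MulAction.orbitRel.Quotient G X)) :
    ∃ Λ : Subgroup G, Finite Λ ∧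
      ∃ (L : G ⧸ Λ → ℝ) (hX : X → ℝ),
        (∀ c, 0 ≤ L c) ∧
        (∀ g : G, L (QuotientGroup.mk g) = 0 ↔ g ∈ Λ) ∧
        (∀ g h : G, L (QuotientGroup.mk (g * h)) ≤
          L (QuotientGroup.mk g) + L (QuotientGroup.mk h)) ∧
        (∀ g : G, L (QuotientGroup.mk g⁻¹) = L (QuotientGroup.mk g)) ∧
        (∀ R : ℝ, 0 < R → {c : G ⧸ Λ | L c ≤ R}.Finite) ∧
        (∀ x, 0 ≤ hX x) ∧
        (∀ (g : G) (x : X), hX (g • x) ≤ L (QuotientGroup.mk g) + hX x) ∧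
        (∀ R : ℝ, 0 < R → {x : X | hX x ≤ R}.Finite) := by
  obtain ⟨N, hN_zero, hN_mul, hN_inv, hN_fin⟩ := exists_proper_length_nat G
  obtain ⟨S, hS_fin, hS⟩ := exists_finite_orbit_representatives G X
  let e : G ⧸ (⊥ : Subgroup G) ≃* G := QuotientGroup.quotientBot
  refine ⟨⊥, inferInstance, fun c => N (e c), fun x => orbitHeight N S x,
    fun _ => by positivity, fun g => ?_, fun g h => ?_, fun g => ?_, fun R _ => ?_,
    fun _ => by positivity, fun g x => ?_, fun R _ => ?_⟩
  · exact (show (N g : ℝ) = 0 ↔ g = 1 by exact_mod_cast hN_zero g).trans Subgroup.mem_bot.symm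
  · show (N (g * h) : ℝ) ≤ N g + N h
    exact_mod_cast hN_mul g h
  · exact congrArg Nat.cast (hN_inv g)
  · exact (finite_setOf_natCast_le hN_fin R).preimage e.injective.injOn
  · show (orbitHeight N S (g • x) : ℝ) ≤ N g + orbitHeight N S x
    exact_mod_cast orbitHeight_smul_le hS hN_mul g x
  · exact finite_setOf_natCast_le (finite_setOf_orbitHeight_le hS hS_fin hN_fin) R

/-- For a countable group G acting on a countable set X with finite stabilizers and finitely
many orbits, there are a finite subgroup Λ ≤ G, a proper symmetric length function on G/Λ,
and a height function on X which is subadditively compatible with the action and has finite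
sublevel sets. -/
theorem stmt3 (G : Type*) [Group G] [Countable G] (X : Type*) [Countable X] [MulAction G X]
    (hstab : ∀ x : X, Finite (MulAction.stabilizer G x))
    (horb : Finite (MulAction.orbitRel.Quotient G X)) :
    ∃ Λ : Subgroup G, Finite Λ ∧
      ∃ (L : G ⧸ Λ → ℝ) (hX : X → ℝ),
        (∀ c, 0 ≤ L c) ∧
        (∀ g : G, L (QuotientGroup.mk g) = 0 ↔ g ∈ Λ) ∧
        (∀ g h : G, L (QuotientGroup.mk (g * h)) ≤
          L (QuotientGroup.mk g) + L (QuotientGroup.mk h)) ∧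
        (∀ g : G, L (QuotientGroup.mk g⁻¹) = L (QuotientGroup.mk g)) ∧
        (∀ R : ℝ, 0 < R → {c : G ⧸ Λ | L c ≤ R}.Finite) ∧
        (∀ x, 0 ≤ hX x) ∧
        (∀ (g : G) (x : X), hX (g • x) ≤ L (QuotientGroup.mk g) + hX x) ∧
        (∀ R : ℝ, 0 < R → {x : X | hX x ≤ R}.Finite) :=
  stmt3_general G X horb
end

section
/- Combining the two ℓ¹ estimates: for z = [a₁,…,aₙ] ∈ Z with aᵢ ≠ x for all i, and w = [x,a₁,…,aₙ], let μ(z) := ω(z)/‖ω(z)‖₁ ∈ Prob(X). Then ‖μ(z) − μ(w)‖₁ ≤ 2(2|z|₀ + 1 + |x|_X)/(|z|₀² + |z|₁). In particular, as z → ∞ within Z_x := {[a₁,…,aₙ] : aᵢ ≠ x for all i}, ‖μ(z) − μ([x]∪z)‖₁ → 0. -/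
open Filter Topology

/-- The weight function ω(z) = Σ_{a ∈ z} (|z|₀ + |a|_X)·δ_a ∈ ℓ¹(X). -/
def omegaWt {X : Type*} [DecidableEq X] (h : X → ℝ) (z : Finset X) : X → ℝ :=
  fun x => if x ∈ z then (z.card : ℝ) + h x else 0

/-- μ(z) := ω(z)/‖ω(z)‖₁, using ‖ω(z)‖₁ = |z|₀² + |z|₁. -/
noncomputable def muWt {X : Type*} [DecidableEq X] (h : X → ℝ) (z : Finset X) : X → ℝ :=
  fun x => omegaWt h z x / ((z.card : ℝ) ^ 2 + ∑ a ∈ z, h a)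

/-!
Normalisation in ℓ¹ is Lipschitz away from zero: ‖u/‖u‖₁ − v/‖v‖₁‖₁ ≤ 2‖u − v‖₁/‖u‖₁, since
u/‖u‖ − v/‖v‖ = (u − v)/‖u‖ + v (1/‖u‖ − 1/‖v‖) and |‖u‖ − ‖v‖| ≤ ‖u − v‖. Passing from z to
[x] ∪ z raises |z|₀ by one, so ω changes by 1 at each a ∈ z and by |z|₀ + 1 + |x|_X at x, whence
‖ω(z) − ω([x] ∪ z)‖₁ = 2|z|₀ + 1 + |x|_X. For the limit, |z|₀ ≤ √‖ω(z)‖₁ and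
|z|₀ + |z|₁ ≤ ‖ω(z)‖₁, so the bound is O(1/√(|z|₀ + |z|₁)).
-/

open Finset

theorem sum_abs_div_sum_abs_sub_div_sum_abs_le {ι : Type*} (s : Finset ι) (u v : ι → ℝ)
    (hu : 0 < ∑ i ∈ s, |u i|) :
    ∑ i ∈ s, |u i / (∑ j ∈ s, |u j|) - v i / (∑ j ∈ s, |v j|)|
      ≤ 2 * (∑ i ∈ s, |u i - v i|) / ∑ i ∈ s, |u i| := by
  set a := ∑ j ∈ s, |u j|
  set b := ∑ j ∈ s, |v j|
  have hb : 0 ≤ b := sum_nonneg fun _ _ => abs_nonneg _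
  have hpoint : ∀ i, |u i / a - v i / b| ≤ |u i - v i| / a + |v i| * |a⁻¹ - b⁻¹| := fun i => by
    calc |u i / a - v i / b| = |(u i - v i) / a + v i * (a⁻¹ - b⁻¹)| := by ring_nf
      _ ≤ |(u i - v i) / a| + |v i * (a⁻¹ - b⁻¹)| := abs_add_le _ _
      _ = |u i - v i| / a + |v i| * |a⁻¹ - b⁻¹| := by rw [abs_div, abs_of_pos hu, abs_mul]
  have hnorm_diff : b * |a⁻¹ - b⁻¹| ≤ |a - b| / a := by
    rcases hb.eq_or_lt with hb0 | hb0
    · rw [← hb0, zero_mul]; positivity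
    · have hkey : b * (a⁻¹ - b⁻¹) = -((a - b) / a) := by field_simp; ring
      calc b * |a⁻¹ - b⁻¹| = |-((a - b) / a)| := by rw [← hkey, abs_mul, abs_of_pos hb0]
        _ ≤ |a - b| / a := by rw [abs_neg, abs_div, abs_of_pos hu]
  have hab : |a - b| ≤ ∑ i ∈ s, |u i - v i| := by
    rw [← sum_sub_distrib]
    exact (abs_sum_le_sum_abs _ _).trans (sum_le_sum fun i _ => abs_abs_sub_abs_le_abs_sub _ _)
  calc ∑ i ∈ s, |u i / a - v i / b|
      ≤ ∑ i ∈ s, (|u i - v i| / a + |v i| * |a⁻¹ - b⁻¹|) := sum_le_sum fun i _ => hpoint i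
    _ = (∑ i ∈ s, |u i - v i|) / a + b * |a⁻¹ - b⁻¹| := by
        rw [sum_add_distrib, sum_div, sum_mul]
    _ ≤ (∑ i ∈ s, |u i - v i|) / a + (∑ i ∈ s, |u i - v i|) / a := by
        gcongr
        exact hnorm_diff.trans (div_le_div_of_nonneg_right hab hu.le)
    _ = 2 * (∑ i ∈ s, |u i - v i|) / a := by ring

section Weights

variable {X : Type*} [DecidableEq X] (h : X → ℝ)

theorem omegaWt_of_notMem {z : Finset X} {y : X} (hy : y ∉ z) : omegaWt h z y = 0 := if_neg hy

theorem sum_abs_omegaWt_of_subset (h0 : ∀ a, 0 ≤ h a) {z w : Finset X} (hzw : z ⊆ w) :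
    ∑ y ∈ w, |omegaWt h z y| = (z.card : ℝ) ^ 2 + ∑ a ∈ z, h a := by
  rw [← sum_subset hzw fun y _ hy => by rw [omegaWt_of_notMem h hy, abs_zero]]
  calc ∑ y ∈ z, |omegaWt h z y| = ∑ y ∈ z, ((z.card : ℝ) + h y) :=
        sum_congr rfl fun y hy => by
          rw [omegaWt, if_pos hy, abs_of_nonneg (by positivity [h0 y])]
    _ = (z.card : ℝ) ^ 2 + ∑ a ∈ z, h a := by
        rw [sum_add_distrib, sum_const, nsmul_eq_mul, sq]

theorem muWt_eq_div_sum_abs_omegaWt (h0 : ∀ a, 0 ≤ h a) {z w : Finset X} (hzw : z ⊆ w) :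
    muWt h z = fun y => omegaWt h z y / ∑ y ∈ w, |omegaWt h z y| := by
  rw [sum_abs_omegaWt_of_subset h h0 hzw]
  rfl

theorem sum_abs_omegaWt_sub_omegaWt_insert {x : X} (hx0 : 0 ≤ h x) {z : Finset X} (hx : x ∉ z) :
    ∑ y ∈ insert x z, |omegaWt h z y - omegaWt h (insert x z) y|
      = 2 * (z.card : ℝ) + 1 + h x := by
  have hcard : ((insert x z).card : ℝ) = z.card + 1 := by
    rw [card_insert_of_notMem hx, Nat.cast_succ]
  rw [sum_insert hx, omegaWt_of_notMem h hx, omegaWt, if_pos (mem_insert_self x z), hcard,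
    zero_sub, abs_neg, abs_of_nonneg (by positivity)]
  calc (z.card : ℝ) + 1 + h x + ∑ y ∈ z, |omegaWt h z y - omegaWt h (insert x z) y|
      = (z.card : ℝ) + 1 + h x + ∑ _y ∈ z, 1 :=
        congrArg _ <| sum_congr rfl fun y hy => by
          rw [omegaWt, omegaWt, if_pos hy, if_pos (mem_insert_of_mem hy), hcard]
          norm_num
    _ = 2 * (z.card : ℝ) + 1 + h x := by rw [sum_const, nsmul_one]; ring

theorem tsum_abs_muWt_sub_muWt_insert_le (h0 : ∀ a, 0 ≤ h a) {x : X} {z : Finset X}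
    (hx : x ∉ z) (hz : z.Nonempty) :
    ∑' y, |muWt h z y - muWt h (insert x z) y|
      ≤ 2 * (2 * (z.card : ℝ) + 1 + h x) / ((z.card : ℝ) ^ 2 + ∑ a ∈ z, h a) := by
  have hsub : z ⊆ insert x z := subset_insert x z
  have hpos : 0 < ∑ y ∈ insert x z, |omegaWt h z y| := by
    rw [sum_abs_omegaWt_of_subset h h0 hsub]
    have hcard : (0 : ℝ) < z.card := Nat.cast_pos.mpr hz.card_pos
    positivity [sum_nonneg fun a (_ : a ∈ z) => h0 a]
  rw [tsum_eq_sum (s := insert x z) fun y hy => by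
      rw [muWt, muWt, omegaWt_of_notMem h hy, omegaWt_of_notMem h fun hyz => hy (hsub hyz)]
      simp,
    muWt_eq_div_sum_abs_omegaWt h h0 hsub, muWt_eq_div_sum_abs_omegaWt h h0 subset_rfl]
  convert sum_abs_div_sum_abs_sub_div_sum_abs_le _ _ _ hpos using 2
  · rw [sum_abs_omegaWt_sub_omegaWt_insert h (h0 x) hx]
  · rw [sum_abs_omegaWt_of_subset h h0 hsub]

end Weights

theorem two_mul_add_div_sq_add_le_div_sqrt {n S c : ℝ} (hn : 1 ≤ n) (hS : 0 ≤ S) (hc : 0 ≤ c) :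
    (2 * n + c) / (n ^ 2 + S) ≤ (2 + c) / √(n + S) := by
  have hT : 0 < n + S := by linarith
  have hTN : n + S ≤ n ^ 2 + S := by nlinarith
  have hN : 0 < n ^ 2 + S := hT.trans_le hTN
  have hsqrtN : √(n ^ 2 + S) * √(n ^ 2 + S) = n ^ 2 + S := Real.mul_self_sqrt hN.le
  have hn_le : n ≤ √(n ^ 2 + S) := Real.le_sqrt_of_sq_le (by linarith)
  have hone_le : 1 ≤ √(n ^ 2 + S) := Real.one_le_sqrt.mpr (by nlinarith)
  calc (2 * n + c) / (n ^ 2 + S) ≤ (2 + c) * √(n ^ 2 + S) / (n ^ 2 + S) := by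
        gcongr; nlinarith
    _ = (2 + c) / √(n ^ 2 + S) := by
        rw [div_eq_div_iff hN.ne' (by positivity), mul_assoc, hsqrtN]
    _ ≤ (2 + c) / √(n + S) := by gcongr

/-- For z ∈ Z_x (i.e. x ∉ z), ‖μ(z) − μ([x]∪z)‖₁ ≤ 2(2|z|₀ + 1 + |x|_X)/(|z|₀² + |z|₁);
in particular the distance tends to 0 as z → ∞ within Z_x (i.e. as |z|₀ + |z|₁ → ∞). -/
theorem stmt8 (X : Type*) [DecidableEq X] (h : X → ℝ) (h0 : ∀ a, 0 ≤ h a) (x : X) :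
    (∀ z : Finset X, x ∉ z → z.Nonempty →
      ∑' y : X, |muWt h z y - muWt h (insert x z) y|
        ≤ 2 * (2 * (z.card : ℝ) + 1 + h x) / ((z.card : ℝ) ^ 2 + ∑ a ∈ z, h a)) ∧
    (∀ zs : ℕ → Finset X, (∀ k, x ∉ zs k) → (∀ k, (zs k).Nonempty) →
      Tendsto (fun k => ((zs k).card : ℝ) + ∑ a ∈ zs k, h a) atTop atTop →
      Tendsto (fun k => ∑' y : X, |muWt h (zs k) y - muWt h (insert x (zs k)) y|)
        atTop (nhds 0)) := by
  refine ⟨fun z hx hz => tsum_abs_muWt_sub_muWt_insert_le h h0 hx hz, fun zs hx hz hT => ?_⟩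
  have hbound : ∀ k, ∑' y, |muWt h (zs k) y - muWt h (insert x (zs k)) y|
      ≤ 2 * (2 + (1 + h x)) / √(((zs k).card : ℝ) + ∑ a ∈ zs k, h a) := fun k => by
    refine (tsum_abs_muWt_sub_muWt_insert_le h h0 (hx k) (hz k)).trans ?_
    rw [mul_div_assoc, mul_div_assoc, add_assoc (2 * _ : ℝ)]
    gcongr 2 * ?_
    exact two_mul_add_div_sq_add_le_div_sqrt (Nat.one_le_cast.mpr (hz k).card_pos)
      (sum_nonneg fun a _ => h0 a) (by linarith [h0 x])
  exact squeeze_zero (fun k => tsum_nonneg fun y => abs_nonneg _) hbound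
    (tendsto_const_nhds.div_atTop (Real.tendsto_sqrt_atTop.comp hT))
end

section
/- Similarly for the group action: with z = [a₁,…,aₙ] ∈ Z and g ∈ G, ‖g·μ(z) − μ(g·z)‖₁ ≤ 2·|g|_G·|z|₀/(|z|₀² + |z|₁), and hence ‖g·μ(z) − μ(g·z)‖₁ → 0 as z → ∞. -/
/-!
Write `n = |z|₀` and `S = n² + |z|₁`. Since `|h (g • a) - h a| ≤ L g`, the normalising
constant `S'` of `g • z` differs from `S` by at most `n · L g`, and the weights of `a` in `ω(z)`
and of `g • a` in `ω(g • z)` differ by at most `L g`. Comparing `p / S` with `q / S'` termwise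
and summing over the `n` points of `z` gives `n · L g / S + S' · n · L g / (S S') = 2 n L g / S`.
As `n ≤ √S`, this is at most `2 L g / √S`, which tends to `0` because `S ≥ n + |z|₁`.
-/

open Filter Topology

open Finset

lemma abs_div_sub_div_le {p q S S' : ℝ} (hS : 0 < S) (hS' : 0 < S') (hq : 0 ≤ q) :
    |p / S - q / S'| ≤ |p - q| / S + q * |S' - S| / (S * S') := by
  have hsplit : p / S - q / S' = (p - q) / S + q * (S' - S) / (S * S') := by
    field_simp
    ring
  rw [hsplit]
  refine (abs_add_le _ _).trans_eq ?_
  rw [abs_div, abs_div, abs_mul, abs_of_pos hS, abs_of_pos (mul_pos hS hS'), abs_of_nonneg hq]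

lemma tendsto_div_sq_add_nhds_zero {ι : Type*} {l : Filter ι} {n s : ι → ℝ}
    (hn : ∀ k, 1 ≤ n k) (hs : ∀ k, 0 ≤ s k) (hns : Tendsto (fun k => n k + s k) l atTop) :
    Tendsto (fun k => n k / (n k ^ 2 + s k)) l (𝓝 0) := by
  have hS : Tendsto (fun k => n k ^ 2 + s k) l atTop :=
    tendsto_atTop_mono (fun k => by nlinarith [hn k]) hns
  have hbound : ∀ k, n k / (n k ^ 2 + s k) ≤ (√(n k ^ 2 + s k))⁻¹ := fun k => by
    have hn_le : n k ≤ √(n k ^ 2 + s k) :=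
      Real.le_sqrt_of_sq_le (le_add_of_nonneg_right (hs k))
    calc n k / (n k ^ 2 + s k) ≤ √(n k ^ 2 + s k) / (n k ^ 2 + s k) := by
          gcongr
          nlinarith [hn k, hs k]
      _ = (√(n k ^ 2 + s k))⁻¹ := by rw [Real.sqrt_div_self', one_div]
  refine squeeze_zero (fun k => div_nonneg (by linarith [hn k]) (by nlinarith [hn k, hs k]))
    hbound ?_
  exact tendsto_inv_atTop_zero.comp (Real.tendsto_sqrt_atTop.comp hS)

section Action

variable {X G : Type*} [Group G] [MulAction G X]

lemma abs_comp_smul_sub_le {h : X → ℝ} {L : G → ℝ} (hLsym : ∀ g, L g⁻¹ = L g)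
    (hcompat : ∀ (g : G) (x : X), h (g • x) ≤ L g + h x) (g : G) (x : X) :
    |h (g • x) - h x| ≤ L g := by
  have hback := hcompat g⁻¹ (g • x)
  rw [inv_smul_smul, hLsym] at hback
  rw [abs_sub_le_iff]
  constructor <;> linarith [hcompat g x]

variable [DecidableEq X]

lemma tsum_eq_sum_image_smul {F : X → ℝ} (g : G) (z : Finset X)
    (hF : ∀ y ∉ z.image (g • ·), F y = 0) :
    ∑' y, F y = ∑ a ∈ z, F (g • a) := by
  rw [tsum_eq_sum hF, sum_image fun a _ b _ hab => MulAction.injective g hab]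

lemma muWt_of_mem {h : X → ℝ} {z : Finset X} {x : X} (hx : x ∈ z) :
    muWt h z x = ((z.card : ℝ) + h x) / ((z.card : ℝ) ^ 2 + ∑ a ∈ z, h a) := by
  simp [muWt, omegaWt, hx]

lemma muWt_of_notMem {h : X → ℝ} {z : Finset X} {x : X} (hx : x ∉ z) : muWt h z x = 0 := by
  simp [muWt, omegaWt, hx]

lemma muWt_image_smul_smul {h : X → ℝ} {z : Finset X} {a : X} (g : G) (ha : a ∈ z) :
    muWt h (z.image (g • ·)) (g • a)
      = ((z.card : ℝ) + h (g • a)) / ((z.card : ℝ) ^ 2 + ∑ b ∈ z, h (g • b)) := by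
  have hinj : Set.InjOn (g • · : X → X) z := (MulAction.injective g).injOn
  rw [muWt_of_mem (mem_image_of_mem _ ha), card_image_of_injOn hinj, sum_image hinj]

lemma tsum_abs_muWt_smul_sub_le {h : X → ℝ} (h0 : ∀ a, 0 ≤ h a) {L : G → ℝ}
    (hLsym : ∀ g, L g⁻¹ = L g) (hcompat : ∀ (g : G) (x : X), h (g • x) ≤ L g + h x) (g : G)
    {z : Finset X} (hz : z.Nonempty) :
    ∑' y, |muWt h z (g⁻¹ • y) - muWt h (z.image (g • ·)) y|
      ≤ 2 * L g * (z.card : ℝ) / ((z.card : ℝ) ^ 2 + ∑ a ∈ z, h a) := by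
  set n : ℝ := (z.card : ℝ) with hn_def
  set S := n ^ 2 + ∑ a ∈ z, h a
  set S' := n ^ 2 + ∑ a ∈ z, h (g • a)
  have hn : 1 ≤ n := by rw [hn_def]; exact_mod_cast hz.card_pos
  have hS : 0 < S := add_pos_of_pos_of_nonneg (by positivity) (sum_nonneg fun a _ => h0 a)
  have hS' : 0 < S' := add_pos_of_pos_of_nonneg (by positivity) (sum_nonneg fun a _ => h0 _)
  have hdiff : |S' - S| ≤ n * L g := by
    calc |S' - S| = |∑ a ∈ z, (h (g • a) - h a)| := by
          rw [sum_sub_distrib, add_sub_add_left_eq_sub]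
      _ ≤ ∑ a ∈ z, |h (g • a) - h a| := abs_sum_le_sum_abs _ _
      _ ≤ ∑ _a ∈ z, L g := sum_le_sum fun a _ => abs_comp_smul_sub_le hLsym hcompat g a
      _ = n * L g := by rw [sum_const, nsmul_eq_mul, ← hn_def]
  have hterm : ∀ a ∈ z, |muWt h z (g⁻¹ • g • a) - muWt h (z.image (g • ·)) (g • a)|
      ≤ L g / S + (n + h (g • a)) * (n * L g) / (S * S') := fun a ha => by
    rw [inv_smul_smul, muWt_of_mem ha, muWt_image_smul_smul g ha]
    refine (abs_div_sub_div_le hS hS' (by linarith [h0 (g • a)])).trans ?_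
    have hweight : |n + h a - (n + h (g • a))| ≤ L g := by
      rw [abs_sub_comm, add_sub_add_left_eq_sub]
      exact abs_comp_smul_sub_le hLsym hcompat g a
    gcongr
    linarith [h0 (g • a)]
  have hmass : ∑ a ∈ z, (n + h (g • a)) = S' := by
    rw [sum_add_distrib, sum_const, nsmul_eq_mul, ← hn_def, ← sq]
  have hsupport :
      ∀ y ∉ z.image (g • ·), |muWt h z (g⁻¹ • y) - muWt h (z.image (g • ·)) y| = 0 := fun y hy => by
    have hy' : g⁻¹ • y ∉ z := fun hmem => hy (by simpa using mem_image_of_mem (g • ·) hmem)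
    rw [muWt_of_notMem hy, muWt_of_notMem hy', sub_zero, abs_zero]
  calc ∑' y, |muWt h z (g⁻¹ • y) - muWt h (z.image (g • ·)) y|
      = ∑ a ∈ z, |muWt h z (g⁻¹ • g • a) - muWt h (z.image (g • ·)) (g • a)| :=
        tsum_eq_sum_image_smul g z hsupport
    _ ≤ ∑ a ∈ z, (L g / S + (n + h (g • a)) * (n * L g) / (S * S')) := sum_le_sum hterm
    _ = n * (L g / S) + S' * (n * L g) / (S * S') := by
        rw [sum_add_distrib, sum_const, nsmul_eq_mul, ← sum_div, ← sum_mul, hmass]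
    _ = 2 * L g * n / S := by
        field_simp
        ring

end Action

theorem stmt9_general (X : Type*) [DecidableEq X] (G : Type*) [Group G] [MulAction G X]
    (h : X → ℝ) (h0 : ∀ a, 0 ≤ h a)
    (L : G → ℝ) (hLsym : ∀ g, L g⁻¹ = L g)
    (hcompat : ∀ (g : G) (x : X), h (g • x) ≤ L g + h x) (g : G) :
    (∀ z : Finset X, z.Nonempty →
      ∑' y : X, |muWt h z (g⁻¹ • y) - muWt h (z.image (g • ·)) y|
        ≤ 2 * L g * (z.card : ℝ) / ((z.card : ℝ) ^ 2 + ∑ a ∈ z, h a)) ∧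
    (∀ zs : ℕ → Finset X, (∀ k, (zs k).Nonempty) →
      Tendsto (fun k => ((zs k).card : ℝ) + ∑ a ∈ zs k, h a) atTop atTop →
      Tendsto (fun k => ∑' y : X,
          |muWt h (zs k) (g⁻¹ • y) - muWt h ((zs k).image (g • ·)) y|) atTop (nhds 0)) := by
  refine ⟨fun z hz => tsum_abs_muWt_smul_sub_le h0 hLsym hcompat g hz, fun zs hne hT => ?_⟩
  have hratio := tendsto_div_sq_add_nhds_zero (fun k => by exact_mod_cast (hne k).card_pos)
    (fun k => sum_nonneg fun a _ => h0 a) hT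
  refine squeeze_zero (fun k => tsum_nonneg fun y => abs_nonneg _)
    (fun k => (tsum_abs_muWt_smul_sub_le h0 hLsym hcompat g (hne k)).trans_eq (mul_div_assoc _ _ _))
    ?_
  simpa using hratio.const_mul (2 * L g)

/-- ‖g·μ(z) − μ(g·z)‖₁ ≤ 2·|g|_G·|z|₀/(|z|₀² + |z|₁), where g·μ(z) is the pushforward
probability measure (y ↦ μ(z)(g⁻¹·y)); hence it tends to 0 as z → ∞. -/
theorem stmt9 (X : Type*) [DecidableEq X] (G : Type*) [Group G] [MulAction G X]
    (h : X → ℝ) (h0 : ∀ a, 0 ≤ h a)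
    (L : G → ℝ) (hL0 : ∀ g, 0 ≤ L g) (hLsym : ∀ g, L g⁻¹ = L g)
    (hcompat : ∀ (g : G) (x : X), h (g • x) ≤ L g + h x) (g : G) :
    (∀ z : Finset X, z.Nonempty →
      ∑' y : X, |muWt h z (g⁻¹ • y) - muWt h (z.image (g • ·)) y|
        ≤ 2 * L g * (z.card : ℝ) / ((z.card : ℝ) ^ 2 + ∑ a ∈ z, h a)) ∧
    (∀ zs : ℕ → Finset X, (∀ k, (zs k).Nonempty) →
      Tendsto (fun k => ((zs k).card : ℝ) + ∑ a ∈ zs k, h a) atTop atTop →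
      Tendsto (fun k => ∑' y : X,
          |muWt h (zs k) (g⁻¹ • y) - muWt h ((zs k).image (g • ·)) y|) atTop (nhds 0)) :=
  stmt9_general X G h h0 L hLsym hcompat g
end

section
/- The infinite product measure space (Ω, μ) = ∏_{x ∈ X₀} ({0,1}, p_x δ₀ + q_x δ₁), with p_x ∈ (0,1) and q_x = 1 − p_x, has no atoms if and only if Σ_{x ∈ X₀} min{p_x, q_x} = ∞. -/
/-!
By continuity from above, the mass of a point `ω` is the infimum over finite `s ⊆ X₀` of the
cylinder masses `∏_{x ∈ s} μ_x(ω_x)`. With `m_x = min{p_x, q_x}` each factor is at most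
`1 - m_x = max{p_x, q_x}`, with equality for the point taking the more likely value in every
coordinate, so an atom exists iff `inf_s ∏_{x ∈ s} (1 - m_x) > 0`. Since
`1 - ∑ m ≤ ∏ (1 - m) ≤ exp (-∑ m)`, this happens iff `∑ m_x < ∞`.
-/

open MeasureTheory

section
variable {ι : Type*} {f : ι → ℝ}

theorem Finset.one_sub_sum_le_prod_one_sub (s : Finset ι)
    (h0 : ∀ x ∈ s, 0 ≤ f x) (h1 : ∀ x ∈ s, f x ≤ 1) :
    1 - ∑ x ∈ s, f x ≤ ∏ x ∈ s, (1 - f x) := by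
  induction s using Finset.cons_induction with
  | empty => simp
  | cons a s ha ih =>
    simp only [Finset.forall_mem_cons] at h0 h1
    rw [Finset.sum_cons, Finset.prod_cons]
    have hs : 0 ≤ ∑ x ∈ s, f x := Finset.sum_nonneg h0.2
    nlinarith [mul_le_mul_of_nonneg_left (ih h0.2 h1.2) (sub_nonneg.2 h1.1)]

theorem Finset.prod_one_sub_le_exp_neg_sum (s : Finset ι)
    (h1 : ∀ x ∈ s, f x ≤ 1) :
    ∏ x ∈ s, (1 - f x) ≤ Real.exp (-∑ x ∈ s, f x) := by
  rw [← Finset.sum_neg_distrib, Real.exp_sum]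
  exact Finset.prod_le_prod (fun x hx => sub_nonneg.2 (h1 x hx))
    fun x _ => Real.one_sub_le_exp_neg _

theorem exists_pos_le_prod_one_sub_of_summable (hf : Summable f) (h0 : ∀ x, 0 ≤ f x)
    (h1 : ∀ x, f x < 1) : ∃ δ > 0, ∀ s : Finset ι, δ ≤ ∏ x ∈ s, (1 - f x) := by
  classical
  -- Outside a finite set `F` the sums of `f` stay below `1 / 2`, so the products of `1 - f`
  -- there stay above `1 / 2`.
  obtain ⟨F, hF⟩ := hf.vanishing (Iio_mem_nhds (by norm_num : (0 : ℝ) < 1 / 2))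
  have hpos : ∀ x, 0 ≤ 1 - f x := fun x => sub_nonneg.2 (h1 x).le
  refine ⟨(∏ x ∈ F, (1 - f x)) * (1 / 2),
    mul_pos (Finset.prod_pos fun x _ => sub_pos.2 (h1 x)) one_half_pos, fun s => ?_⟩
  have hF' : ∏ x ∈ F, (1 - f x) ≤ ∏ x ∈ s ∩ F, (1 - f x) :=
    Finset.prod_anti_set_of_le_one hpos (fun x => by linarith [h0 x]) Finset.inter_subset_right
  have htail : 1 / 2 ≤ ∏ x ∈ s \ F, (1 - f x) := by
    have := (s \ F).one_sub_sum_le_prod_one_sub (fun x _ => h0 x) (fun x _ => (h1 x).le)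
    linarith [Set.mem_Iio.1 (hF (s \ F) Finset.sdiff_disjoint)]
  rw [← Finset.prod_inter_mul_prod_sdiff s F]
  exact mul_le_mul hF' htail one_half_pos.le (Finset.prod_nonneg fun x _ => hpos x)

theorem exists_prod_one_sub_lt_of_not_summable (hf : ¬ Summable f) (h0 : ∀ x, 0 ≤ f x)
    (h1 : ∀ x, f x ≤ 1) {ε : ℝ} (hε : 0 < ε) : ∃ s : Finset ι, ∏ x ∈ s, (1 - f x) < ε := by
  obtain ⟨s, hs⟩ : ∃ s : Finset ι, -Real.log ε < ∑ x ∈ s, f x := by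
    by_contra! h
    exact hf (summable_of_sum_le h0 h)
  refine ⟨s, (s.prod_one_sub_le_exp_neg_sum fun x _ => h1 x).trans_lt ?_⟩
  rw [← Real.exp_log hε]
  exact Real.exp_lt_exp.2 (by linarith)

theorem iInf_ofReal_prod_one_sub_eq_zero_iff (h0 : ∀ x, 0 ≤ f x) (h1 : ∀ x, f x < 1) :
    ⨅ s : Finset ι, ENNReal.ofReal (∏ x ∈ s, (1 - f x)) = 0 ↔ ¬ Summable f := by
  constructor
  · intro h hf
    obtain ⟨δ, hδ, hle⟩ := exists_pos_le_prod_one_sub_of_summable hf h0 h1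
    have : ENNReal.ofReal δ ≤ 0 := h ▸ le_iInf fun s => ENNReal.ofReal_le_ofReal (hle s)
    exact absurd this (by simpa using hδ)
  · intro hf
    refine le_antisymm (ENNReal.le_of_forall_pos_le_add fun ε hε _ => ?_) bot_le
    obtain ⟨s, hs⟩ := exists_prod_one_sub_lt_of_not_summable hf h0 (fun x => (h1 x).le)
      (NNReal.coe_pos.2 hε)
    rw [zero_add, ← ENNReal.ofReal_coe_nnreal]
    exact (iInf_le _ s).trans (ENNReal.ofReal_le_ofReal hs.le)
end

theorem measure_singleton_eq_iInf_cylinder {ι β : Type*} [Countable ι] [MeasurableSpace β]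
    [MeasurableSingletonClass β] (μ : Measure (ι → β)) [IsFiniteMeasure μ] (ω : ι → β) :
    μ {ω} = ⨅ s : Finset ι, μ {ω' | ∀ x ∈ s, ω' x = ω x} := by
  have hmeas (s : Finset ι) : MeasurableSet {ω' : ι → β | ∀ x ∈ s, ω' x = ω x} :=
    MeasurableSet.pi s.countable_toSet fun x _ => measurableSet_singleton (ω x)
  have hsing : ⋂ s : Finset ι, {ω' : ι → β | ∀ x ∈ s, ω' x = ω x} = {ω} := by
    ext ω'
    simp only [Set.mem_iInter, Set.mem_singleton_iff]
    exact ⟨fun h => funext fun x => h {x} x (Finset.mem_singleton_self x), fun h _ x _ => h ▸ rfl⟩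
  rw [← hsing]
  exact Antitone.measure_iInter (fun s t hst ω' h x hx => h x (Finset.mem_of_subset hst hx))
    (fun s => (hmeas s).nullMeasurableSet) ⟨∅, measure_ne_top μ _⟩

theorem ite_le_one_sub_min (c : Prop) [Decidable c] (a : ℝ) :
    (if c then a else 1 - a) ≤ 1 - min a (1 - a) := by
  split_ifs <;> linarith [min_le_left a (1 - a), min_le_right a (1 - a)]

/-- The product probability measure μ = ⊗_{x ∈ X₀} (p_x δ₀ + q_x δ₁) on Ω = {0,1}^{X₀}
(characterized by its values on cylinder sets) has no atoms — every singleton is null —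
if and only if Σ_x min{p_x, q_x} = ∞ (i.e. this nonnegative series is not summable). -/
theorem stmt11 (X₀ : Type*) [Countable X₀] (p : X₀ → ℝ)
    (hp : ∀ x, p x ∈ Set.Ioo (0 : ℝ) 1)
    (μ : Measure (X₀ → Fin 2)) [IsProbabilityMeasure μ]
    (hμ : ∀ (s : Finset X₀) (a : X₀ → Fin 2),
      μ {ω : X₀ → Fin 2 | ∀ x ∈ s, ω x = a x}
        = ∏ x ∈ s, ENNReal.ofReal (if a x = 0 then p x else 1 - p x)) :
    (∀ ω : X₀ → Fin 2, μ {ω} = 0) ↔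
      ¬ Summable (fun x : X₀ => min (p x) (1 - p x)) := by
  have hw0 : ∀ (ω : X₀ → Fin 2) x, 0 ≤ if ω x = 0 then p x else 1 - p x := fun ω x => by
    split_ifs <;> linarith [(hp x).1, (hp x).2]
  have hsing : ∀ ω, μ {ω} =
      ⨅ s : Finset X₀, ENNReal.ofReal (∏ x ∈ s, if ω x = 0 then p x else 1 - p x) := fun ω => by
    simp_rw [measure_singleton_eq_iInf_cylinder, hμ,
      ENNReal.ofReal_prod_of_nonneg fun x _ => hw0 ω x]
  -- Every coordinate of `ωmax` takes its more likely value, so no point is heavier.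
  let ωmax : X₀ → Fin 2 := fun x => if p x ≤ 1 - p x then 1 else 0
  have hmax :
      μ {ωmax} = ⨅ s : Finset X₀, ENNReal.ofReal (∏ x ∈ s, (1 - min (p x) (1 - p x))) := by
    refine (hsing ωmax).trans (iInf_congr fun s => congrArg _ (Finset.prod_congr rfl fun x _ => ?_))
    by_cases h : p x ≤ 1 - p x
    · simp [ωmax, h]
    · simp [ωmax, h, min_eq_right (not_le.1 h).le]
  have hle : ∀ ω, μ {ω} ≤ μ {ωmax} := fun ω => by
    rw [hsing, hmax]
    exact iInf_mono fun s => ENNReal.ofReal_le_ofReal <|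
      Finset.prod_le_prod (fun x _ => hw0 ω x) fun x _ => ite_le_one_sub_min _ _
  rw [← iInf_ofReal_prod_one_sub_eq_zero_iff
    (fun x => le_min (hp x).1.le (by linarith [(hp x).2]))
    (fun x => (min_le_left _ _).trans_lt (hp x).2), ← hmax]
  exact ⟨fun h => h ωmax, fun h ω => le_antisymm (h ▸ hle ω) bot_le⟩
end

section
/- Let X be a set, x ∈ X, and let ℓ(x) := ℓ(δ_x) be the left creation operator on F_anti(ℓ²(X)). For f ∈ ℓ^∞(Z) (acting diagonally via ι), set Z_x := {[x₁,…,xₙ] ∈ Z : xᵢ ≠ x for all i} ∪ {⋆}. Then: (1) ι(f)·ℓ(x) = ℓ(x)·ι(f([x, ·])), where f([x, ·]) is the function z = [x₁,…,xₙ] ↦ f([x,x₁,…,xₙ]) on Z_x (and 0 off Z_x); (2) ℓ(x)·ι(f) = ℓ(x)·ι(f·1_{Z_x}). Consequently the commutator satisfies [ℓ(x), ι(f)] = ℓ(x)·ι((f − f([x,·]))·1_{Z_x}). -/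
/-!
Both operators are explicit in the basis `δ_S`, `S : Finset X`: `ℓ(x)` moves `δ_S` to `± δ_{S ∪ {x}}`
when `x ∉ S` and kills it otherwise, while `ι(f)` scales `δ_S` by `f S`. Hence multiplying after
`ℓ(x)` by `f` is multiplying before it by `f ([x, ·])`, and multiplying before it only sees `f` on
`Z_x`. The commutator formula follows, since `f · 1_{Z_x} - f([x, ·]) = (f - f([x, ·])) · 1_{Z_x}`.
-/

namespace Fock

variable {X : Type*}

/-- `ℓ(x)` on `ℓ²(Finset X) ≅ F_anti(ℓ²(X))`, where `δ_S` is the wedge of the `δ_y`, `y ∈ S`, in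
increasing order; the sign comes from moving `δ_x` into its place. -/
def IsCreation [LinearOrder X] (x : X)
    (L : lp (fun _ : Finset X => ℂ) 2 →L[ℂ] lp (fun _ : Finset X => ℂ) 2) : Prop :=
  ∀ (v : lp (fun _ : Finset X => ℂ) 2) (S : Finset X),
    (L v : ∀ _ : Finset X, ℂ) S =
      if x ∈ S then (-1 : ℂ) ^ (S.filter (· < x)).card * (v : ∀ _ : Finset X, ℂ) (S.erase x)
      else 0

def IsMultiplication (g : Finset X → ℂ)
    (T : lp (fun _ : Finset X => ℂ) 2 →L[ℂ] lp (fun _ : Finset X => ℂ) 2) : Prop :=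
  ∀ v S, (T v : ∀ _ : Finset X, ℂ) S = g S * (v : ∀ _ : Finset X, ℂ) S

variable {g h : Finset X → ℂ} {T T' : lp (fun _ : Finset X => ℂ) 2 →L[ℂ] lp (fun _ : Finset X => ℂ) 2}

theorem IsMultiplication.sub (hT : IsMultiplication g T) (hT' : IsMultiplication h T') :
    IsMultiplication (g - h) (T - T') := by
  intro v S
  simp only [sub_apply, lp.coeFn_sub, Pi.sub_apply, hT v S, hT' v S]
  ring

variable [LinearOrder X] {x : X} {L : lp (fun _ : Finset X => ℂ) 2 →L[ℂ] lp (fun _ : Finset X => ℂ) 2}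

theorem IsMultiplication.comp_creation (hL : IsCreation x L) (hT : IsMultiplication g T)
    (hT' : IsMultiplication (fun S => if x ∈ S then 0 else g (insert x S)) T') :
    T ∘L L = L ∘L T' := by
  ext v S
  simp only [ContinuousLinearMap.comp_apply, hT _ S, hL _ S, hT' _ (S.erase x)]
  by_cases hx : x ∈ S
  · simp only [hx, if_true, Finset.mem_erase, ne_eq, not_true_eq_false, false_and, if_false,
      Finset.insert_erase hx]
    ring
  · simp [hx]

theorem creation_comp_eq_of_eqOn (hL : IsCreation x L) (hT : IsMultiplication g T)
    (hT' : IsMultiplication h T') (hgh : ∀ S, x ∉ S → g S = h S) :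
    L ∘L T = L ∘L T' := by
  ext v S
  simp only [ContinuousLinearMap.comp_apply, hL _ S, hT _ (S.erase x), hT' _ (S.erase x)]
  split_ifs with hx
  · rw [hgh _ (Finset.notMem_erase x S)]
  · rfl

end Fock

open Fock in
theorem stmt17_general (X : Type*) [LinearOrder X] (x : X)
    (Lx : lp (fun _ : Finset X => ℂ) 2 →L[ℂ] lp (fun _ : Finset X => ℂ) 2)
    (hLx : ∀ (v : lp (fun _ : Finset X => ℂ) 2) (S : Finset X),
      (Lx v : ∀ _ : Finset X, ℂ) S =
        if x ∈ S then (-1 : ℂ) ^ (S.filter (· < x)).card *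
          (v : ∀ _ : Finset X, ℂ) (S.erase x) else 0)
    (f : Finset X → ℂ)
    (Tf Tf' Tcut Tdiff : lp (fun _ : Finset X => ℂ) 2 →L[ℂ] lp (fun _ : Finset X => ℂ) 2)
    (hTf : ∀ v S, (Tf v : ∀ _ : Finset X, ℂ) S = f S * (v : ∀ _ : Finset X, ℂ) S)
    (hTf' : ∀ v S, (Tf' v : ∀ _ : Finset X, ℂ) S =
      (if x ∈ S then 0 else f (insert x S)) * (v : ∀ _ : Finset X, ℂ) S)
    (hTcut : ∀ v S, (Tcut v : ∀ _ : Finset X, ℂ) S =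
      (if x ∈ S then 0 else f S) * (v : ∀ _ : Finset X, ℂ) S)
    (hTdiff : ∀ v S, (Tdiff v : ∀ _ : Finset X, ℂ) S =
      (if x ∈ S then 0 else f S - f (insert x S)) * (v : ∀ _ : Finset X, ℂ) S) :
    Tf ∘L Lx = Lx ∘L Tf' ∧
    Lx ∘L Tf = Lx ∘L Tcut ∧
    Lx ∘L Tf - Tf ∘L Lx = Lx ∘L Tdiff := by
  have hL : IsCreation x Lx := hLx
  have commute : Tf ∘L Lx = Lx ∘L Tf' := IsMultiplication.comp_creation hL hTf hTf'
  have cut : Lx ∘L Tf = Lx ∘L Tcut := creation_comp_eq_of_eqOn hL hTf hTcut fun S hS => by simp [hS]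
  refine ⟨commute, cut, ?_⟩
  calc Lx ∘L Tf - Tf ∘L Lx = Lx ∘L (Tcut - Tf') := by
        rw [cut, commute, ContinuousLinearMap.comp_sub]
    _ = Lx ∘L Tdiff :=
        creation_comp_eq_of_eqOn hL (IsMultiplication.sub hTcut hTf') hTdiff fun S hS => by
          simp [hS]

/-- Commutation relations between the left creation operator ℓ(x) and the diagonal algebra
ℓ^∞(Z) on F_anti(ℓ²(X)) ≅ ℓ²(Finset X): (1) ι(f)ℓ(x) = ℓ(x)ι(f([x,·])), where f([x,·]) is
supported on Z_x = {z : x ∉ z} with value f([x]∪z); (2) ℓ(x)ι(f) = ℓ(x)ι(f·1_{Z_x});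
consequently [ℓ(x), ι(f)] = ℓ(x)·ι((f − f([x,·]))·1_{Z_x}). -/
theorem stmt17 (X : Type*) [LinearOrder X] (x : X)
    (Lx : lp (fun _ : Finset X => ℂ) 2 →L[ℂ] lp (fun _ : Finset X => ℂ) 2)
    (hLx : ∀ (v : lp (fun _ : Finset X => ℂ) 2) (S : Finset X),
      (Lx v : ∀ _ : Finset X, ℂ) S =
        if x ∈ S then (-1 : ℂ) ^ (S.filter (· < x)).card *
          (v : ∀ _ : Finset X, ℂ) (S.erase x) else 0)
    (f : Finset X → ℂ) (hf : ∃ C : ℝ, ∀ S, ‖f S‖ ≤ C)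
    (Tf Tf' Tcut Tdiff : lp (fun _ : Finset X => ℂ) 2 →L[ℂ] lp (fun _ : Finset X => ℂ) 2)
    (hTf : ∀ v S, (Tf v : ∀ _ : Finset X, ℂ) S = f S * (v : ∀ _ : Finset X, ℂ) S)
    (hTf' : ∀ v S, (Tf' v : ∀ _ : Finset X, ℂ) S =
      (if x ∈ S then 0 else f (insert x S)) * (v : ∀ _ : Finset X, ℂ) S)
    (hTcut : ∀ v S, (Tcut v : ∀ _ : Finset X, ℂ) S =
      (if x ∈ S then 0 else f S) * (v : ∀ _ : Finset X, ℂ) S)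
    (hTdiff : ∀ v S, (Tdiff v : ∀ _ : Finset X, ℂ) S =
      (if x ∈ S then 0 else f S - f (insert x S)) * (v : ∀ _ : Finset X, ℂ) S) :
    Tf ∘L Lx = Lx ∘L Tf' ∧
    Lx ∘L Tf = Lx ∘L Tcut ∧
    Lx ∘L Tf - Tf ∘L Lx = Lx ∘L Tdiff :=
  stmt17_general X x Lx hLx f Tf Tf' Tcut Tdiff hTf hTf' hTcut hTdiff
end

section
/- Let H be a Hilbert space with anti-unitary involution I, and consider the creation operators ℓ(ξ) on F_anti(H). Let x ∈ X with x ≠ Ix, let d, d' > 0, set η := d·δ_x, η' := d'·δ_{Ix} and c := (1/√2)(ℓ(η) + ℓ(η')*). Then for any vector ξ = δ_{y₁}∧⋯∧δ_{yₘ} with all yᵢ ∉ {x, Ix}, one has 2cc*ξ = √(m+1)√(m+2)·dd'·δ_x∧δ_{Ix}∧ξ + d'²ξ and 2c*cξ = −√(m+1)√(m+2)·dd'·δ_x∧δ_{Ix}∧ξ + d²ξ; hence cc* + c*c acts as ((d²+d'²)/2)·1 on such vectors. -/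
set_option maxHeartbeats 1000000

/-- Computation for c := (1/√2)(d·ℓ(δ_x) + d'·ℓ(δ_{Ix})*) on F_anti(ℓ²(X)) ≅ ℓ²(Finset X)
(here x ≠ x' := Ix are two distinct points): for a wedge vector e_S over S disjoint from
{x, x'}, one has 2cc*e_S = dd'·(δ_x∧δ_{x'}-type vector) + d'²e_S and
2c*ce_S = −dd'·(same vector) + d²e_S, hence (cc* + c*c)e_S = ((d² + d'²)/2)·e_S. -/
theorem stmt18 (X : Type*) [LinearOrder X] (x x' : X) (hxx : x ≠ x')
    (d d' : ℝ) (hd : 0 < d) (hd' : 0 < d')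
    (c : lp (fun _ : Finset X => ℂ) 2 →L[ℂ] lp (fun _ : Finset X => ℂ) 2)
    (hc : ∀ (v : lp (fun _ : Finset X => ℂ) 2) (S : Finset X),
      (c v : ∀ _ : Finset X, ℂ) S =
        (Real.sqrt 2 : ℂ)⁻¹ *
          ((d : ℂ) * (if x ∈ S then (-1 : ℂ) ^ (S.filter (· < x)).card *
              (v : ∀ _ : Finset X, ℂ) (S.erase x) else 0)
            + (d' : ℂ) * (if x' ∈ S then 0 else (-1 : ℂ) ^ (S.filter (· < x')).card *
              (v : ∀ _ : Finset X, ℂ) (insert x' S))))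
    (S : Finset X) (hxS : x ∉ S) (hx'S : x' ∉ S) :
    (2 : ℂ) • c (ContinuousLinearMap.adjoint c (lp.single 2 S 1)) =
        ((d : ℂ) * (d' : ℂ) *
            (-1 : ℂ) ^ (((insert x' S).filter (· < x)).card + (S.filter (· < x')).card))
          • lp.single 2 (insert x (insert x' S)) 1 + ((d' : ℂ) ^ 2) • lp.single 2 S 1 ∧
    (2 : ℂ) • ContinuousLinearMap.adjoint c (c (lp.single 2 S 1)) =
        (-((d : ℂ) * (d' : ℂ) *
            (-1 : ℂ) ^ (((insert x' S).filter (· < x)).card + (S.filter (· < x')).card)))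
          • lp.single 2 (insert x (insert x' S)) 1 + ((d : ℂ) ^ 2) • lp.single 2 S 1 ∧
    c (ContinuousLinearMap.adjoint c (lp.single 2 S 1)) +
        ContinuousLinearMap.adjoint c (c (lp.single 2 S 1)) =
      ((((d : ℂ) ^ 2 + (d' : ℂ) ^ 2)) / 2) • lp.single 2 S 1 := by
  classical
  have h2s : (2 : ℂ) * ((Real.sqrt 2 : ℂ)⁻¹ * (Real.sqrt 2 : ℂ)⁻¹) = 1 := by
    rw [← mul_inv, ← Complex.ofReal_mul, Real.mul_self_sqrt (by norm_num)]
    norm_num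
  have hsa : ∀ (i j : Finset X) (a : ℂ),
      (lp.single 2 i a : ∀ _ : Finset X, ℂ) j = if j = i then a else 0 := by
    intro i j a
    rw [lp.single_apply]
    split_ifs with h
    · subst h; simp
    · simp [Pi.single_apply, h]
  -- coordinate formula for the adjoint on single vectors
  have hadj : ∀ (S₀ T : Finset X),
      (ContinuousLinearMap.adjoint c (lp.single 2 S₀ 1) : ∀ _ : Finset X, ℂ) T =
        (starRingEnd ℂ) ((c (lp.single 2 T 1) : ∀ _ : Finset X, ℂ) S₀) := by
    intro S₀ T
    have h1 : (ContinuousLinearMap.adjoint c (lp.single 2 S₀ 1) : ∀ _ : Finset X, ℂ) T =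
        (inner ℂ (lp.single 2 T (1:ℂ)) (ContinuousLinearMap.adjoint c (lp.single 2 S₀ 1)) : ℂ) := by
      rw [lp.inner_single_left]
      simp [RCLike.inner_apply]
    rw [h1, ContinuousLinearMap.adjoint_inner_right, lp.inner_single_right]
    simp [RCLike.inner_apply]
  have hxx'S : x ∉ insert x' S := by
    simp [Finset.mem_insert, hxx, hxS]
  have hx'xS : x' ∉ insert x S := by
    simp [Finset.mem_insert, hxx.symm, hx'S]
  -- E1 : c e_S = (√2)⁻¹ d (-1)^a • e_{insert x S}
  have hE1 : c (lp.single 2 S 1) =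
      ((Real.sqrt 2 : ℂ)⁻¹ * (d : ℂ) * (-1) ^ (S.filter (· < x)).card) •
        lp.single 2 (insert x S) 1 := by
    apply lp.ext
    funext T
    simp only [hc, lp.coeFn_smul, Pi.smul_apply, hsa, smul_eq_mul]
    have hne : insert x' T ≠ S := fun h => hx'S (h ▸ Finset.mem_insert_self x' T)
    by_cases hT : T = insert x S
    · subst hT
      simp [Finset.erase_insert hxS, hne, Finset.filter_insert, lt_irrefl]
      ring
    · by_cases hx1 : x ∈ T
      · have h2 : T.erase x ≠ S := fun h => hT (by rw [← h, Finset.insert_erase hx1])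
        simp [hx1, h2, hne, hT]
      · simp [hx1, hne, hT]
  -- E2 : c* e_S = (√2)⁻¹ d' (-1)^b • e_{insert x' S}
  have hE2 : ContinuousLinearMap.adjoint c (lp.single 2 S 1) =
      ((Real.sqrt 2 : ℂ)⁻¹ * (d' : ℂ) * (-1) ^ (S.filter (· < x')).card) •
        lp.single 2 (insert x' S) 1 := by
    apply lp.ext
    funext T
    rw [hadj S T]
    simp only [hc, lp.coeFn_smul, Pi.smul_apply, hsa, smul_eq_mul]
    by_cases hT : T = insert x' S
    · subst hT
      simp [hxS, hx'S, map_mul, map_inv₀, map_pow, Complex.conj_ofReal]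
      ring
    · have h2 : insert x' S ≠ T := fun h => hT h.symm
      simp [hxS, hx'S, h2, hT]
  -- E3 : c e_{insert x' S} = (√2)⁻¹ d (-1)^A • e_B + (√2)⁻¹ d' (-1)^b • e_S
  have hE3 : c (lp.single 2 (insert x' S) 1) =
      ((Real.sqrt 2 : ℂ)⁻¹ * (d : ℂ) * (-1) ^ ((insert x' S).filter (· < x)).card) •
          lp.single 2 (insert x (insert x' S)) 1 +
        ((Real.sqrt 2 : ℂ)⁻¹ * (d' : ℂ) * (-1) ^ (S.filter (· < x')).card) •
          lp.single 2 S 1 := by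
    apply lp.ext
    funext T
    simp only [hc, lp.coeFn_add, lp.coeFn_smul, Pi.add_apply, Pi.smul_apply, hsa, smul_eq_mul]
    by_cases hTB : T = insert x (insert x' S)
    · subst hTB
      have hBS : insert x (insert x' S) ≠ S := fun h => hxS (h ▸ Finset.mem_insert_self x _)
      have hxmem : x' ∈ insert x (insert x' S) := by simp
      simp [Finset.erase_insert hxx'S, hxmem, hBS, Finset.filter_insert, lt_irrefl]
      ring
    · by_cases hTS : T = S
      · subst hTS
        simp [hxS, hx'S, hTB]
        ring
      · have h1 : T.erase x ≠ insert x' S ∨ x ∉ T := by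
          by_cases hx1 : x ∈ T
          · left
            exact fun h => hTB (by rw [← h, Finset.insert_erase hx1])
          · right; exact hx1
        have h2 : x' ∈ T ∨ insert x' T ≠ insert x' S := by
          by_cases hx2 : x' ∈ T
          · left; exact hx2
          · right
            intro h
            exact hTS (by rw [← Finset.erase_insert hx2, h, Finset.erase_insert hx'S])
        rcases h1 with h1 | h1 <;> rcases h2 with h2 | h2 <;>
          simp [h1, h2, hTB, hTS]
  -- E4 : c* e_{insert x S} = (√2)⁻¹ d (-1)^a • e_S + (√2)⁻¹ d' (-1)^{a'} • e_B
  have hE4 : ContinuousLinearMap.adjoint c (lp.single 2 (insert x S) 1) =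
      ((Real.sqrt 2 : ℂ)⁻¹ * (d : ℂ) * (-1) ^ (S.filter (· < x)).card) •
          lp.single 2 S 1 +
        ((Real.sqrt 2 : ℂ)⁻¹ * (d' : ℂ) * (-1) ^ ((insert x S).filter (· < x')).card) •
          lp.single 2 (insert x (insert x' S)) 1 := by
    apply lp.ext
    funext T
    rw [hadj (insert x S) T]
    have hcomm : insert x' (insert x S) = insert x (insert x' S) := Finset.insert_comm x' x S
    simp only [hc, lp.coeFn_add, lp.coeFn_smul, Pi.add_apply, Pi.smul_apply, hsa, smul_eq_mul]
    rw [hcomm]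
    have hBS : insert x (insert x' S) ≠ S := fun h => hxS (h ▸ Finset.mem_insert_self x _)
    have hxm : x ∈ insert x S := Finset.mem_insert_self x S
    by_cases hTS : T = S
    · subst hTS
      simp [hxm, hx'xS, Finset.erase_insert hxS, hBS.symm, hBS,
        Finset.filter_insert, lt_irrefl, map_mul, map_inv₀, map_pow, Complex.conj_ofReal]
      ring
    · by_cases hTB : T = insert x (insert x' S)
      · subst hTB
        simp [hxm, hx'xS, Finset.erase_insert hxS, hTS, Ne.symm hTS,
          fun h : S = insert x (insert x' S) => hBS h.symm,
          Finset.filter_insert, lt_irrefl, map_mul, map_inv₀, map_pow, Complex.conj_ofReal]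
        ring
      · have e1 : S ≠ T := fun h => hTS h.symm
        have e2 : insert x (insert x' S) ≠ T := fun h => hTB h.symm
        simp [hxm, hx'xS, Finset.erase_insert hxS, e1, e2, hTS, hTB]
  -- sign relation
  have hsgn : ((-1 : ℂ)) ^ (S.filter (· < x)).card * (-1) ^ ((insert x S).filter (· < x')).card
      = -((-1 : ℂ) ^ (((insert x' S).filter (· < x)).card + (S.filter (· < x')).card)) := by
    have hxf : x ∉ S.filter (· < x') := fun h => hxS (Finset.mem_filter.1 h).1
    have hx'f : x' ∉ S.filter (· < x) := fun h => hx'S (Finset.mem_filter.1 h).1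
    rcases hxx.lt_or_gt with h | h
    · rw [Finset.filter_insert, if_pos h, Finset.filter_insert, if_neg (asymm h),
        Finset.card_insert_of_notMem hxf, pow_add, pow_succ]
      ring
    · rw [Finset.filter_insert, if_neg (asymm h), Finset.filter_insert, if_pos h,
        Finset.card_insert_of_notMem hx'f, pow_add, pow_succ]
      ring
  have hq : ∀ n : ℕ, ((-1 : ℂ)) ^ n * (-1) ^ n = 1 := fun n => by
    rw [← pow_add]; exact Even.neg_one_pow ⟨n, rfl⟩
  have hAb : ((-1 : ℂ)) ^ (((insert x' S).filter (· < x)).card + (S.filter (· < x')).card)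
      = (-1 : ℂ) ^ (((insert x' S).filter (· < x)).card) * (-1) ^ ((S.filter (· < x')).card) :=
    pow_add _ _ _
  have g1 : (2 : ℂ) • c (ContinuousLinearMap.adjoint c (lp.single 2 S 1)) =
      ((d : ℂ) * (d' : ℂ) *
          (-1 : ℂ) ^ (((insert x' S).filter (· < x)).card + (S.filter (· < x')).card))
        • lp.single 2 (insert x (insert x' S)) 1 + ((d' : ℂ) ^ 2) • lp.single 2 S 1 := by
    rw [hE2, map_smul, hE3]
    match_scalars
    · linear_combination ((d : ℂ) * (d' : ℂ) * ((-1 : ℂ) ^ ((S.filter (· < x')).card) *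
          (-1 : ℂ) ^ (((insert x' S).filter (· < x)).card))) * h2s -
        ((d : ℂ) * (d' : ℂ)) * hAb
    · linear_combination ((d' : ℂ) ^ 2 * ((-1 : ℂ) ^ ((S.filter (· < x')).card) *
          (-1 : ℂ) ^ ((S.filter (· < x')).card))) * h2s +
        ((d' : ℂ) ^ 2) * hq ((S.filter (· < x')).card)
  have g2 : (2 : ℂ) • ContinuousLinearMap.adjoint c (c (lp.single 2 S 1)) =
      (-((d : ℂ) * (d' : ℂ) *
          (-1 : ℂ) ^ (((insert x' S).filter (· < x)).card + (S.filter (· < x')).card)))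
        • lp.single 2 (insert x (insert x' S)) 1 + ((d : ℂ) ^ 2) • lp.single 2 S 1 := by
    rw [hE1, map_smul, hE4]
    match_scalars
    · linear_combination ((d : ℂ) ^ 2 * ((-1 : ℂ) ^ ((S.filter (· < x)).card) *
          (-1 : ℂ) ^ ((S.filter (· < x)).card))) * h2s +
        ((d : ℂ) ^ 2) * hq ((S.filter (· < x)).card)
    · linear_combination ((d : ℂ) * (d' : ℂ) * ((-1 : ℂ) ^ ((S.filter (· < x)).card) *
          (-1 : ℂ) ^ (((insert x S).filter (· < x')).card))) * h2s +
        ((d : ℂ) * (d' : ℂ)) * hsgn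
  refine ⟨g1, g2, ?_⟩
  rw [hE2, map_smul, hE3, hE1, map_smul, hE4]
  match_scalars
  · linear_combination ((Real.sqrt 2 : ℂ)⁻¹ * (Real.sqrt 2 : ℂ)⁻¹ * (d : ℂ) * (d' : ℂ)) * hsgn -
      ((Real.sqrt 2 : ℂ)⁻¹ * (Real.sqrt 2 : ℂ)⁻¹ * (d : ℂ) * (d' : ℂ)) * hAb
  · linear_combination ((d' : ℂ) ^ 2 * ((-1 : ℂ) ^ ((S.filter (· < x')).card) *
        (-1 : ℂ) ^ ((S.filter (· < x')).card)) / 2) * h2s +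
      ((d : ℂ) ^ 2 * ((-1 : ℂ) ^ ((S.filter (· < x)).card) *
        (-1 : ℂ) ^ ((S.filter (· < x)).card)) / 2) * h2s +
      ((d' : ℂ) ^ 2 / 2) * hq ((S.filter (· < x')).card) +
      ((d : ℂ) ^ 2 / 2) * hq ((S.filter (· < x)).card)
end
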